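/- arXiv:1010.2419 — 2 statements merged into one kernel-verified Lean document; each statement's English description precedes it below -/
import Mathlib

section
/- Let F be a field of characteristic different from 2 and n ≥ 2. Let M_n(F)^(+) be the Jordan algebra of all n×n matrices over F equipped with the product X∘Y = (1/2)(XY + YX). Then every 1/2-derivation φ of M_n(F)^(+) is of the form φ(X) = α·X for some α ∈ F. -/
/-- The Jordan (symmetrized) product `X ∘ Y = (1/2)(XY + YX)` on matrices. -/
def jordMul {F : Type*} [Field F] {n : ℕ}
    (X Y : Matrix (Fin n) (Fin n) F) : Matrix (Fin n) (Fin n) F :=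
  (1 / 2 : F) • (X * Y + Y * X)

/-!
Putting `Y = 1` in the defining identity shows that a `1/2`-derivation is the Jordan
multiplication `φ X = X ∘ C` by `C = φ 1`. Putting `X = Y = E` for an idempotent `E` then gives
`EC + CE = 2 ECE`, which forces `EC = ECE = CE`. Since `E_ij = (E_ii + E_ij) - E_ii` is a
difference of idempotents, `C` commutes with every matrix unit and is therefore a scalar `α`,
so `φ X = X ∘ α = α X`.
-/

theorem IsIdempotentElem.commute_of_mul_add_mul_eq {R : Type*} [NonUnitalRing R] {e c : R}
    (he : IsIdempotentElem e) (h : e * c + c * e = e * c * e + e * c * e) : Commute e c := by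
  have hleft : e * c = e * c * e := by
    have := congrArg (e * ·) h
    simp only [mul_add, ← mul_assoc, he.eq] at this
    exact add_right_cancel this
  have hright : c * e = e * c * e := by
    have := congrArg (· * e) h
    simp only [add_mul, he.mul_mul_self] at this
    exact add_left_cancel this
  exact hleft.trans hright.symm

namespace Matrix

variable {n α : Type*} [Fintype n] [DecidableEq n]

theorem isIdempotentElem_single_self_one [Semiring α] (i : n) :
    IsIdempotentElem (single i i (1 : α)) := by
  simp [IsIdempotentElem]

theorem isIdempotentElem_single_one_add_single [Semiring α] {i j : n} (hij : i ≠ j) (a : α) :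
    IsIdempotentElem (single i i 1 + single i j a) := by
  simp [IsIdempotentElem, add_mul, mul_add, single_mul_single_same, hij.symm]

theorem mem_range_scalar_of_forall_isIdempotentElem_commute [Ring α] {M : Matrix n n α}
    (hM : ∀ E : Matrix n n α, IsIdempotentElem E → Commute E M) :
    M ∈ Set.range (scalar n) := by
  refine mem_range_scalar_of_commute_single fun i j hij => ?_
  have hdiff := (hM _ (isIdempotentElem_single_one_add_single hij 1)).sub_left
    (hM _ (isIdempotentElem_single_self_one i))
  rwa [add_sub_cancel_left] at hdiff

end Matrix

theorem one_half_smul_add_self {K M : Type*} [DivisionRing K] [AddCommGroup M] [Module K M]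
    (h2 : (2 : K) ≠ 0) (x : M) : (1 / 2 : K) • (x + x) = x := by
  rw [← two_smul K x, smul_smul, one_div_mul_cancel h2, one_smul]

section JordanProduct

variable {F : Type*} [Field F] {n : ℕ}

theorem jordMul_comm (X Y : Matrix (Fin n) (Fin n) F) : jordMul X Y = jordMul Y X := by
  rw [jordMul, jordMul, add_comm]

theorem two_smul_jordMul (h2 : (2 : F) ≠ 0) (X Y : Matrix (Fin n) (Fin n) F) :
    (2 : F) • jordMul X Y = X * Y + Y * X := by
  rw [jordMul, smul_smul, mul_one_div_cancel h2, one_smul]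

theorem jordMul_one_right (h2 : (2 : F) ≠ 0) (X : Matrix (Fin n) (Fin n) F) :
    jordMul X 1 = X := by
  rw [jordMul, mul_one, one_mul, one_half_smul_add_self h2]

theorem jordMul_self_of_isIdempotentElem (h2 : (2 : F) ≠ 0) {E : Matrix (Fin n) (Fin n) F}
    (hE : IsIdempotentElem E) : jordMul E E = E := by
  rw [jordMul, hE.eq, one_half_smul_add_self h2]

theorem jordMul_scalar_right (h2 : (2 : F) ≠ 0) (X : Matrix (Fin n) (Fin n) F) (a : F) :
    jordMul X (Matrix.scalar (Fin n) a) = a • X := by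
  rw [jordMul, Matrix.scalar_apply, ← Matrix.smul_eq_mul_diagonal, ← Matrix.smul_eq_diagonal_mul,
    one_half_smul_add_self h2]

def IsHalfDerivation (φ : Matrix (Fin n) (Fin n) F →ₗ[F] Matrix (Fin n) (Fin n) F) : Prop :=
  ∀ X Y, φ (jordMul X Y) = (1 / 2 : F) • (jordMul (φ X) Y + jordMul X (φ Y))

variable {φ : Matrix (Fin n) (Fin n) F →ₗ[F] Matrix (Fin n) (Fin n) F}

theorem IsHalfDerivation.eq_jordMul_map_one (h2 : (2 : F) ≠ 0) (hφ : IsHalfDerivation φ)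
    (X : Matrix (Fin n) (Fin n) F) : φ X = jordMul X (φ 1) := by
  have h := congrArg ((2 : F) • ·) (hφ X 1)
  simp only [jordMul_one_right h2, smul_smul, mul_one_div_cancel h2, one_smul, two_smul] at h
  exact add_left_cancel h

theorem IsHalfDerivation.commute_map_one (h2 : (2 : F) ≠ 0) (hφ : IsHalfDerivation φ)
    {E : Matrix (Fin n) (Fin n) F} (hE : IsIdempotentElem E) : Commute E (φ 1) := by
  have hEE := hφ E E
  rw [jordMul_self_of_isIdempotentElem h2 hE, hφ.eq_jordMul_map_one h2,
    jordMul_comm (jordMul E _) E, one_half_smul_add_self h2] at hEE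
  set C := φ 1
  have hlin : E * C + C * E = E * jordMul E C + jordMul E C * E :=
    (two_smul_jordMul h2 E C).symm.trans ((congrArg _ hEE).trans (two_smul_jordMul h2 _ _))
  have hquad : (2 : F) • (E * C + C * E) = E * C + C * E + (E * C * E + E * C * E) :=
    calc (2 : F) • (E * C + C * E)
        = E * ((2 : F) • jordMul E C) + ((2 : F) • jordMul E C) * E := by
          rw [hlin, smul_add, Matrix.mul_smul, Matrix.smul_mul]
      _ = E * (E * C + C * E) + (E * C + C * E) * E := by rw [two_smul_jordMul h2]
      _ = E * C + C * E + (E * C * E + E * C * E) := by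
          simp only [mul_add, add_mul, hE.mul_self_mul, hE.mul_mul_self, ← mul_assoc]
          abel
  rw [two_smul] at hquad
  exact hE.commute_of_mul_add_mul_eq (add_left_cancel hquad)

end JordanProduct

theorem half_derivation_of_full_matrix_jordan_algebra_general
    {F : Type*} [Field F] (hchar : (2 : F) ≠ 0) (n : ℕ)
    (φ : Matrix (Fin n) (Fin n) F →ₗ[F] Matrix (Fin n) (Fin n) F)
    (hφ : ∀ X Y : Matrix (Fin n) (Fin n) F,
      φ (jordMul X Y) = (1 / 2 : F) • (jordMul (φ X) Y + jordMul X (φ Y))) :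
    ∃ α : F, ∀ X : Matrix (Fin n) (Fin n) F, φ X = α • X := by
  have hφ' : IsHalfDerivation φ := hφ
  obtain ⟨α, hα⟩ := Matrix.mem_range_scalar_of_forall_isIdempotentElem_commute
    fun E hE => hφ'.commute_map_one hchar hE
  refine ⟨α, fun X => ?_⟩
  rw [hφ'.eq_jordMul_map_one hchar, ← hα, jordMul_scalar_right hchar]

/-- **1/2-derivations of `M_n(F)⁺`.**
Let `F` be a field of characteristic not `2` and `n ≥ 2`.  Every
`1/2`-derivation `φ` of the Jordan algebra `M_n(F)⁺` of all `n × n`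
matrices with the product `X ∘ Y = (1/2)(XY + YX)` is of the form
`φ X = α • X` for some `α ∈ F`. -/
theorem half_derivation_of_full_matrix_jordan_algebra
    {F : Type*} [Field F] (hchar : (2 : F) ≠ 0) (n : ℕ) (hn : 2 ≤ n)
    (φ : Matrix (Fin n) (Fin n) F →ₗ[F] Matrix (Fin n) (Fin n) F)
    (hφ : ∀ X Y : Matrix (Fin n) (Fin n) F,
      φ (jordMul X Y) = (1 / 2 : F) • (jordMul (φ X) Y + jordMul X (φ Y))) :
    ∃ α : F, ∀ X : Matrix (Fin n) (Fin n) F, φ X = α • X :=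
  half_derivation_of_full_matrix_jordan_algebra_general hchar n φ hφ
end

section
/- Let F be a field of characteristic different from 2, and let V = V₀ ⊕ V₁ be a Z₂-graded F-vector space with V₀ ≠ 0 and V₁ ≠ 0, equipped with a bilinear form f : V × V → F such that f restricted to V₀ is symmetric and non-degenerate, f restricted to V₁ is alternating (skew-symmetric) and non-degenerate, and f(V₀, V₁) = f(V₁, V₀) = 0. Let J(V,f) be the superalgebra on F ⊕ V with multiplication (α + v)·(β + w) = (αβ + f(v,w)) + (αw + βv). Then every 1/2-derivation φ of J(V,f) is of the form φ(x) = α·x for some α ∈ F. -/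
/-!
Putting `x = 1` in the defining identity shows that a `1/2`-derivation `φ` of a unital algebra
is left multiplication by `c = φ 1`. For `J(V,f)` and `c = γ + u`, the identity on
`v, w ∈ V` becomes `2 f(v,w) u = f(u,v) w + f(u,w) v`. Taking `v ∈ V₀`, `w ∈ V₁` (so that
`f(v,w) = 0`) and using `V₀ ∩ V₁ = 0`, the functional `f(u,·)` vanishes on `V₀` and on `V₁`,
hence everywhere, and non-degeneracy forces `u = 0`, i.e. `φ = γ · id`.
-/

/-- The multiplication of the Jordan (super)algebra `J(V,f)` of a bilinear
form `f`, defined on `F ⊕ V` by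
`(α + v)·(β + w) = (αβ + f(v,w)) + (αw + βv)`. -/
def jordanFormMul {F V : Type*} [Field F] [AddCommGroup V] [Module F V]
    (f : V →ₗ[F] V →ₗ[F] F) (x y : F × V) : F × V :=
  (x.1 * y.1 + f x.2 y.2, x.1 • y.2 + y.1 • x.2)

theorem eq_mul_apply_of_half_derivation {F A : Type*} [Field F] [AddCommGroup A] [Module F A]
    (hchar : (2 : F) ≠ 0) (mul : A → A → A) (e : A) (he : ∀ y, mul e y = y) (φ : A → A)
    (hφ : ∀ x y, φ (mul x y) = (1 / 2 : F) • (mul (φ x) y + mul x (φ y))) (y : A) :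
    φ y = mul (φ e) y := by
  have h := congrArg ((2 : F) • ·) (hφ e y)
  simp only [he, smul_smul, mul_one_div_cancel hchar, one_smul, two_smul] at h
  exact add_right_cancel h

section JordanFormMul

variable {F V : Type*} [Field F] [AddCommGroup V] [Module F V] (f : V →ₗ[F] V →ₗ[F] F)

theorem jordanFormMul_one_left (y : F × V) : jordanFormMul f (1, 0) y = y := by
  simp [jordanFormMul]

theorem two_mul_smul_eq_of_half_derivation (hchar : (2 : F) ≠ 0) (φ : F × V → F × V)
    (hφ : ∀ x y, φ (jordanFormMul f x y)
      = (1 / 2 : F) • (jordanFormMul f (φ x) y + jordanFormMul f x (φ y)))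
    (c : F × V) (hc : ∀ y, φ y = jordanFormMul f c y) (v w : V) :
    (2 * f v w) • c.2 = f c.2 v • w + f c.2 w • v := by
  have h := congrArg (fun z => (2 : F) • z.2) (hφ (0, v) (0, w))
  simp only [hc, jordanFormMul] at h
  simpa [smul_smul, ← mul_assoc, mul_comm, hchar] using h

end JordanFormMul

section Graded

variable {F V : Type*} [Field F] [AddCommGroup V] [Module F V] {V0 V1 : Submodule F V}

theorem Submodule.eq_zero_of_smul_add_smul_eq_zero (hd : Disjoint V0 V1) {v w : V} (hv : v ∈ V0)
    (hw : w ∈ V1) (hw0 : w ≠ 0) {a b : F} (h : a • w + b • v = 0) : a = 0 := by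
  have hzero : a • w = 0 :=
    Submodule.disjoint_def'.mp hd.symm _ (V1.smul_mem a hw) _ (V0.neg_mem (V0.smul_mem b hv))
      (eq_neg_of_add_eq_zero_left h)
  exact (smul_eq_zero.mp hzero).resolve_right hw0

theorem LinearMap.eq_zero_of_smul_add_smul_eq_zero (hsup : V0 ⊔ V1 = ⊤) (hd : Disjoint V0 V1)
    (hV0 : V0 ≠ ⊥) (hV1 : V1 ≠ ⊥) (g : V →ₗ[F] F)
    (hg : ∀ v ∈ V0, ∀ w ∈ V1, g v • w + g w • v = 0) : g = 0 := by
  obtain ⟨v0, hv0, hv0ne⟩ := (Submodule.ne_bot_iff V0).mp hV0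
  obtain ⟨w1, hw1, hw1ne⟩ := (Submodule.ne_bot_iff V1).mp hV1
  have hker0 : V0 ≤ LinearMap.ker g := fun v hv =>
    Submodule.eq_zero_of_smul_add_smul_eq_zero hd hv hw1 hw1ne (hg v hv w1 hw1)
  have hker1 : V1 ≤ LinearMap.ker g := fun w hw =>
    Submodule.eq_zero_of_smul_add_smul_eq_zero hd.symm hw hv0 hv0ne
      ((add_comm _ _).trans (hg v0 hv0 w hw))
  exact LinearMap.ker_eq_top.mp (top_le_iff.mp (hsup ▸ sup_le hker0 hker1))

theorem eq_zero_of_form_apply_eq_zero (hsup : V0 ⊔ V1 = ⊤) (f : V →ₗ[F] V →ₗ[F] F)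
    (hnd0 : ∀ v ∈ V0, (∀ w ∈ V0, f v w = 0) → v = 0)
    (hnd1 : ∀ v ∈ V1, (∀ w ∈ V1, f v w = 0) → v = 0)
    (h10 : ∀ v ∈ V1, ∀ w ∈ V0, f v w = 0) {u : V} (hu : f u = 0) : u = 0 := by
  obtain ⟨u0, hu0, u1, hu1, rfl⟩ :=
    Submodule.mem_sup.mp (hsup ▸ Submodule.mem_top : u ∈ V0 ⊔ V1)
  have hu0z : u0 = 0 := hnd0 u0 hu0 fun w hw => by
    simpa [h10 u1 hu1 w hw] using LinearMap.congr_fun hu w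
  rw [hu0z, zero_add] at hu ⊢
  exact hnd1 u1 hu1 fun w _ => by simpa using LinearMap.congr_fun hu w

end Graded

theorem half_derivation_of_jordan_superalgebra_of_superform_general
    {F V : Type*} [Field F] [AddCommGroup V] [Module F V]
    (hchar : (2 : F) ≠ 0)
    (V0 V1 : Submodule F V)
    (hsup : V0 ⊔ V1 = ⊤) (hinf : V0 ⊓ V1 = ⊥)
    (hV0ne : V0 ≠ ⊥) (hV1ne : V1 ≠ ⊥)
    (f : V →ₗ[F] V →ₗ[F] F)
    (hnd0 : ∀ v ∈ V0, (∀ w ∈ V0, f v w = 0) → v = 0)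
    (hnd1 : ∀ v ∈ V1, (∀ w ∈ V1, f v w = 0) → v = 0)
    (h01 : ∀ v ∈ V0, ∀ w ∈ V1, f v w = 0)
    (h10 : ∀ v ∈ V1, ∀ w ∈ V0, f v w = 0)
    (φ : (F × V) →ₗ[F] (F × V))
    (hφ : ∀ x y : F × V,
      φ (jordanFormMul f x y)
        = (1 / 2 : F) • (jordanFormMul f (φ x) y + jordanFormMul f x (φ y))) :
    ∃ α : F, ∀ x : F × V, φ x = α • x := by
  set c := φ (1, 0)
  have hmul : ∀ y, φ y = jordanFormMul f c y :=
    eq_mul_apply_of_half_derivation hchar _ _ (jordanFormMul_one_left f) φ hφ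
  have hfc : f c.2 = 0 :=
    LinearMap.eq_zero_of_smul_add_smul_eq_zero hsup (disjoint_iff.mpr hinf) hV0ne hV1ne _
      fun v hv w hw => by
        have key := two_mul_smul_eq_of_half_derivation f hchar φ hφ c hmul v w
        simpa [h01 v hv w hw] using key.symm
  have hc2 : c.2 = 0 := eq_zero_of_form_apply_eq_zero hsup f hnd0 hnd1 h10 hfc
  refine ⟨c.1, fun x => ?_⟩
  rw [hmul x]
  simp [jordanFormMul, hc2, Prod.smul_def]

/-- **1/2-derivations of the Jordan superalgebra of a superform.**
Let `F` be a field of characteristic not `2` and `V = V₀ ⊕ V₁` a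
`ℤ/2`-graded vector space with `V₀ ≠ 0 ≠ V₁`, equipped with a bilinear
form `f` which is symmetric and non-degenerate on `V₀`, alternating
(skew-symmetric) and non-degenerate on `V₁`, and with
`f(V₀,V₁) = f(V₁,V₀) = 0`.  Then every `1/2`-derivation `φ` of the
superalgebra `J(V,f) = F ⊕ V` is of the form `φ x = α • x`
for some `α ∈ F`. -/
theorem half_derivation_of_jordan_superalgebra_of_superform
    {F V : Type*} [Field F] [AddCommGroup V] [Module F V]
    (hchar : (2 : F) ≠ 0)
    (V0 V1 : Submodule F V)
    (hsup : V0 ⊔ V1 = ⊤) (hinf : V0 ⊓ V1 = ⊥)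
    (hV0ne : V0 ≠ ⊥) (hV1ne : V1 ≠ ⊥)
    (f : V →ₗ[F] V →ₗ[F] F)
    (hsymm : ∀ v ∈ V0, ∀ w ∈ V0, f v w = f w v)
    (hnd0 : ∀ v ∈ V0, (∀ w ∈ V0, f v w = 0) → v = 0)
    (halt : ∀ v ∈ V1, f v v = 0)
    (hskew : ∀ v ∈ V1, ∀ w ∈ V1, f v w = - f w v)
    (hnd1 : ∀ v ∈ V1, (∀ w ∈ V1, f v w = 0) → v = 0)
    (h01 : ∀ v ∈ V0, ∀ w ∈ V1, f v w = 0)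
    (h10 : ∀ v ∈ V1, ∀ w ∈ V0, f v w = 0)
    (φ : (F × V) →ₗ[F] (F × V))
    (hφ : ∀ x y : F × V,
      φ (jordanFormMul f x y)
        = (1 / 2 : F) • (jordanFormMul f (φ x) y + jordanFormMul f x (φ y))) :
    ∃ α : F, ∀ x : F × V, φ x = α • x :=
  half_derivation_of_jordan_superalgebra_of_superform_general hchar V0 V1 hsup hinf hV0ne hV1ne f
    hnd0 hnd1 h01 h10 φ hφ
end
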